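/- Equivalent projective formulations of the Furstenberg–Kesten conditions: (i) Condition A2 holds if and only if there exists ε ∈ (0,1) such that g·S ⊆ S_ε for every g ∈ supp μ; (ii) Condition A1 holds if and only if there exists ε ∈ (0,1) such that g·S ⊆ S_ε and gᵀ·S ⊆ S_ε for every g ∈ supp μ, where S_ε = {v ∈ S : ⟨f,v⟩ ≥ ε for all f ∈ S} and gᵀ is the transpose of g. -/

import Mathlib

open MeasureTheory ProbabilityTheory Filter Topology Real

noncomputable section

/-- The space of `d × d` real matrices. -/
abbrev Mat (d : ℕ) := Matrix (Fin d) (Fin d) ℝ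

instance (d : ℕ) : MeasurableSpace (Mat d) := MeasurableSpace.pi

variable {d : ℕ}

/-- The `L¹` norm of a vector: `‖v‖ = ∑ᵢ |vᵢ|`. -/
def norm1 (v : Fin d → ℝ) : ℝ := ∑ i, |v i|

/-- The scalar product `⟨u, v⟩ = ∑ᵢ uᵢ vᵢ`. -/
def dotp (u v : Fin d → ℝ) : ℝ := ∑ i, u i * v i

/-- The matrix norm `‖g‖ = ∑_{i,j} g^{i,j}`. -/
def matNorm (g : Mat d) : ℝ := ∑ i, ∑ j, g i j

/-- `N(g) = max(‖g‖, ‖g‖⁻¹)`. -/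
def Npos (g : Mat d) : ℝ := max (matNorm g) (matNorm g)⁻¹

/-- The part `S` of the unit sphere lying in the positive quadrant. -/
def Sph (d : ℕ) : Set (Fin d → ℝ) := {v | (∀ i, 0 ≤ v i) ∧ norm1 v = 1}

/-- `S_ε = {v ∈ S : ⟨f, v⟩ ≥ ε for all f ∈ S}`. -/
def Seps (d : ℕ) (ε : ℝ) : Set (Fin d → ℝ) := {v ∈ Sph d | ∀ f ∈ Sph d, ε ≤ dotp f v}

/-- The projective action `g · v = g v / ‖g v‖`. -/
def projAct (g : Mat d) (v : Fin d → ℝ) : Fin d → ℝ := (norm1 (g.mulVec v))⁻¹ • g.mulVec v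

/-- The support of a measure: points whose every neighbourhood has positive mass. -/
def msupp {α : Type*} [TopologicalSpace α] [MeasurableSpace α] (μ : Measure α) : Set α :=
  {x | ∀ U ∈ nhds x, 0 < μ U}

/-- Condition A1 (Furstenberg--Kesten): all the entries of each `g ∈ supp μ` are comparable. -/
def CondA1 (μ : Measure (Mat d)) : Prop :=
  ∃ c : ℝ, 1 < c ∧ ∀ g ∈ msupp μ, ∀ i j k l : Fin d, g i j ≤ c * g k l

/-- Condition A2: the entries of each fixed column of each `g ∈ supp μ` are comparable. -/
def CondA2 (μ : Measure (Mat d)) : Prop :=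
  ∃ c : ℝ, 1 < c ∧ ∀ g ∈ msupp μ, ∀ j i k : Fin d, g i j ≤ c * g k j

/-- The smallest closed semigroup `Γ_μ` containing `supp μ`. -/
def GammaMu (μ : Measure (Mat d)) : Set (Mat d) :=
  closure ((Subsemigroup.closure (msupp μ) : Subsemigroup (Mat d)) : Set (Mat d))

/-- Condition A3 (non-arithmeticity). -/
def CondA3 (μ : Measure (Mat d)) (ν : Measure (Fin d → ℝ)) : Prop :=
  ¬ ∃ t : ℝ, 0 < t ∧ ∃ θ : ℝ, θ ∈ Set.Ico 0 (2 * π) ∧ ∃ φ : (Fin d → ℝ) → ℝ,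
    ∀ g ∈ GammaMu μ, ∀ v ∈ msupp ν,
      Complex.exp (Complex.I * (t : ℂ) * (Real.log (norm1 (g.mulVec v)) : ℂ)) * (φ (projAct g v) : ℂ)
        = Complex.exp (Complex.I * (θ : ℂ)) * (φ v : ℂ)

/-- The standard normal distribution function `Φ`. -/
def stdPhi (y : ℝ) : ℝ := ∫ t in Set.Iic y, Real.exp (-t ^ 2 / 2) / Real.sqrt (2 * π)

/-- The standard normal density `φ_N`. -/
def stdphi (y : ℝ) : ℝ := Real.exp (-y ^ 2 / 2) / Real.sqrt (2 * π)

/-- `m(u,v) = sup {λ > 0 : λ vᵢ ≤ uᵢ ∀ i}`. -/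
def mrel (u v : Fin d → ℝ) : ℝ := sSup {l : ℝ | 0 < l ∧ ∀ i, l * v i ≤ u i}

/-- The Hilbert cross-ratio metric `𝐝` on `S`. -/
def hilbD (u v : Fin d → ℝ) : ℝ :=
  (1 - mrel u v * mrel v u) / (1 + mrel u v * mrel v u)

/-- Membership in the Banach space `B_γ` of continuous complex functions on `S` with finite
`γ`-Hölder norm with respect to the Hilbert cross-ratio metric. -/
def memB (d : ℕ) (γ : ℝ) (φ : (Fin d → ℝ) → ℂ) : Prop :=
  ContinuousOn φ (Sph d) ∧
  BddAbove ((fun v => ‖φ v‖) '' Sph d) ∧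
  BddAbove {x : ℝ | ∃ u ∈ Sph d, ∃ v ∈ Sph d, u ≠ v ∧ x = ‖φ u - φ v‖ / hilbD u v ^ γ}

/-- The norm `‖φ‖_γ = sup_S ‖φ‖ + [φ]_γ` of the Banach space `B_γ`. -/
def Bnorm (d : ℕ) (γ : ℝ) (φ : (Fin d → ℝ) → ℂ) : ℝ :=
  sSup ((fun v => ‖φ v‖) '' Sph d) +
  sSup {x : ℝ | ∃ u ∈ Sph d, ∃ v ∈ Sph d, u ≠ v ∧ x = ‖φ u - φ v‖ / hilbD u v ^ γ}

/-- `I_μ⁺ = {s ≥ 0 : E ‖g₁‖^s < ∞}`. -/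
def Iplus (μ : Measure (Mat d)) : Set ℝ :=
  {s | 0 ≤ s ∧ Integrable (fun g : Mat d => matNorm g ^ s) μ}

/-- `I_μ⁻ = {s ≤ 0 : E ‖g₁‖^s < ∞}`. -/
def Iminus (μ : Measure (Mat d)) : Set ℝ :=
  {s | s ≤ 0 ∧ Integrable (fun g : Mat d => matNorm g ^ s) μ}

/-- `Λ = log κ`. -/
def Lam (κ : ℝ → ℝ) (s : ℝ) : ℝ := Real.log (κ s)

/-- The Fenchel--Legendre transform `Λ*` of `Λ`. -/
def LamStar (μ : Measure (Mat d)) (κ : ℝ → ℝ) (q : ℝ) : ℝ :=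
  sSup {x : ℝ | ∃ s ∈ Iplus μ ∪ Iminus μ, x = s * q - Lam κ s}

/-- `σ_s = √(Λ''(s))`. -/
def sigS (κ : ℝ → ℝ) (s : ℝ) : ℝ := Real.sqrt (deriv (deriv (Lam κ)) s)

/-- The extension of the eigenfunction `r_s` to `ℝ₊^d \ {0}`,
`r_s(v) = ‖v‖^s r_s(v/‖v‖)`. -/
def rExt (s : ℝ) (rs : (Fin d → ℝ) → ℝ) (v : Fin d → ℝ) : ℝ :=
  norm1 v ^ s * rs ((norm1 v)⁻¹ • v)

/-- The spectral radius `ρ(g) = lim_k ‖g^k‖^{1/k}`. -/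
def specRad (g : Mat d) : ℝ := limUnder atTop (fun k : ℕ => matNorm (g ^ k) ^ (k : ℝ)⁻¹)

end

section AuxLemmas

variable {d : ℕ}

lemma single_mem_Sph (hd : 1 ≤ d) (j : Fin d) :
    (fun i => if i = j then (1:ℝ) else 0) ∈ Sph d := by
  constructor
  · intro i; dsimp only; split <;> norm_num
  · simp [norm1, apply_ite abs]

lemma dotp_single (k : Fin d) (w : Fin d → ℝ) :
    dotp (fun i => if i = k then (1:ℝ) else 0) w = w k := by
  simp [dotp, ite_mul]

lemma extract_lemma {g : Mat d} (hd : 1 ≤ d) (hg : ∀ i j, 0 < g i j) {ε : ℝ} (hε : 0 < ε)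
    (h : (projAct g) '' Sph d ⊆ Seps d ε) :
    ∀ j i k : Fin d, g i j ≤ ε⁻¹ * g k j := by
  intro j i k
  set e : Fin d → ℝ := fun i => if i = j then (1:ℝ) else 0 with he
  have heS : e ∈ Sph d := single_mem_Sph hd j
  have hmem : projAct g e ∈ Seps d ε := h ⟨e, heS, rfl⟩
  have hmv : g.mulVec e = fun i => g i j := by
    funext i; simp [Matrix.mulVec, dotProduct, he, mul_ite]
  have hN : norm1 (g.mulVec e) = ∑ m, g m j := by
    rw [hmv]; unfold norm1
    exact Finset.sum_congr rfl fun m _ => abs_of_pos (hg m j)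
  have hNpos : 0 < ∑ m, g m j :=
    Finset.sum_pos (fun m _ => hg m j) ⟨⟨0, hd⟩, Finset.mem_univ _⟩
  have hk : ε ≤ dotp (fun i => if i = k then (1:ℝ) else 0) (projAct g e) :=
    hmem.2 _ (single_mem_Sph hd k)
  rw [dotp_single] at hk
  have hval : projAct g e k = (∑ m, g m j)⁻¹ * g k j := by
    have hN' : (norm1 fun i => g i j) = ∑ m, g m j := hmv ▸ hN
    simp only [projAct, Pi.smul_apply, smul_eq_mul, hmv, hN']
  rw [hval] at hk
  have hle : g i j ≤ ∑ m, g m j :=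
    Finset.single_le_sum (fun m _ => (hg m j).le) (Finset.mem_univ i)
  have h1 : ε * (∑ m, g m j) ≤ g k j := by
    rw [inv_mul_eq_div, le_div_iff₀ hNpos] at hk; linarith
  rw [inv_mul_eq_div, le_div_iff₀ hε]
  nlinarith

lemma forward_lemma {g : Mat d} (hd : 1 ≤ d) (hg : ∀ i j, 0 < g i j) {c : ℝ} (hc : 0 < c)
    (h : ∀ j i k : Fin d, g i j ≤ c * g k j) :
    (projAct g) '' Sph d ⊆ Seps d (1 / (c * d)) := by
  have hcd : (0:ℝ) < c * d := by
    have : (0:ℝ) < (d:ℝ) := by exact_mod_cast Nat.lt_of_lt_of_le Nat.zero_lt_one hd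
    positivity
  rintro w ⟨v, hv, rfl⟩
  obtain ⟨hv0, hv1⟩ := hv
  have hsumv : ∑ i, v i = 1 := by
    rw [← hv1]; unfold norm1
    exact (Finset.sum_congr rfl fun i _ => (abs_of_nonneg (hv0 i)).symm)
  have hex : ∃ j, 0 < v j := by
    by_contra hcon
    push_neg at hcon
    have : ∑ i, v i = 0 := Finset.sum_eq_zero fun i _ => le_antisymm (hcon i) (hv0 i)
    rw [hsumv] at this; norm_num at this
  obtain ⟨j₀, hj₀⟩ := hex
  set u := g.mulVec v with hu
  have hupos : ∀ i, 0 < u i := by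
    intro i
    have h1 : g i j₀ * v j₀ ≤ ∑ l, g i l * v l :=
      Finset.single_le_sum (fun l _ => mul_nonneg (hg i l).le (hv0 l)) (Finset.mem_univ j₀)
    have : u i = ∑ l, g i l * v l := rfl
    rw [this]
    exact lt_of_lt_of_le (mul_pos (hg i j₀) hj₀) h1
  have hN : norm1 u = ∑ m, u m := by
    unfold norm1
    exact Finset.sum_congr rfl fun m _ => abs_of_pos (hupos m)
  have hNpos : 0 < norm1 u := by
    rw [hN]; exact Finset.sum_pos (fun m _ => hupos m) ⟨⟨0, hd⟩, Finset.mem_univ _⟩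
  have key : ∀ i, norm1 u ≤ c * d * u i := by
    intro i
    have step : ∀ m : Fin d, u m ≤ c * u i := by
      intro m
      have : ∑ l, g m l * v l ≤ ∑ l, c * (g i l * v l) :=
        Finset.sum_le_sum fun l _ => by
          have := h l m i
          nlinarith [hv0 l]
      calc u m = ∑ l, g m l * v l := rfl
        _ ≤ ∑ l, c * (g i l * v l) := this
        _ = c * u i := by rw [← Finset.mul_sum]; rfl
    calc norm1 u = ∑ m, u m := hN
      _ ≤ ∑ _m : Fin d, c * u i := Finset.sum_le_sum fun m _ => step m
      _ = c * d * u i := by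
          rw [Finset.sum_const, Finset.card_univ, Fintype.card_fin, nsmul_eq_mul]; ring
  have hwval : ∀ i, projAct g v i = u i / norm1 u := by
    intro i; simp [projAct, ← hu, inv_mul_eq_div]
  have hweps : ∀ i, 1 / (c * d) ≤ projAct g v i := by
    intro i
    rw [hwval, div_le_div_iff₀ hcd hNpos]
    linarith [key i]
  have hwS : projAct g v ∈ Sph d := by
    constructor
    · intro i; rw [hwval]; exact div_nonneg (hupos i).le hNpos.le
    · unfold norm1
      have : ∀ i, |projAct g v i| = u i / norm1 u := by
        intro i; rw [hwval]; exact abs_of_nonneg (div_nonneg (hupos i).le hNpos.le)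
      rw [Finset.sum_congr rfl fun i _ => this i, ← Finset.sum_div, ← hN,
        div_self hNpos.ne']
  refine ⟨hwS, fun f hf => ?_⟩
  obtain ⟨hf0, hf1⟩ := hf
  have hsumf : ∑ i, f i = 1 := by
    rw [← hf1]; unfold norm1
    exact (Finset.sum_congr rfl fun i _ => (abs_of_nonneg (hf0 i)).symm)
  calc (1 : ℝ) / (c * d) = (∑ i, f i) * (1 / (c * d)) := by rw [hsumf, one_mul]
    _ = ∑ i, f i * (1 / (c * d)) := by rw [Finset.sum_mul]
    _ ≤ ∑ i, f i * projAct g v i :=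
        Finset.sum_le_sum fun i _ => mul_le_mul_of_nonneg_left (hweps i) (hf0 i)
    _ = dotp f (projAct g v) := rfl

end AuxLemmas

/-- Lemma 2.1: equivalent projective formulations of the Furstenberg–Kesten
conditions A1 and A2, in terms of the projective action mapping `S` into `S_ε`. -/
theorem conditions_equivalent_projective
    (d : ℕ) (hd : 2 ≤ d)
    (μ : Measure (Mat d)) [IsProbabilityMeasure μ]
    (hpos : msupp μ ⊆ {g : Mat d | ∀ i j, 0 < g i j}) :
    (CondA2 μ ↔ ∃ ε : ℝ, ε ∈ Set.Ioo (0 : ℝ) 1 ∧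
        ∀ g ∈ msupp μ, (projAct g) '' Sph d ⊆ Seps d ε) ∧
    (CondA1 μ ↔ ∃ ε : ℝ, ε ∈ Set.Ioo (0 : ℝ) 1 ∧
        ∀ g ∈ msupp μ, (projAct g) '' Sph d ⊆ Seps d ε ∧
          (projAct g.transpose) '' Sph d ⊆ Seps d ε) := by
  have hd1 : 1 ≤ d := le_trans (by norm_num) hd
  have hdR : (2:ℝ) ≤ (d:ℝ) := by exact_mod_cast hd
  constructor
  · constructor
    · rintro ⟨c, hc1, hcol⟩
      refine ⟨1 / (c * d), ⟨by positivity, ?_⟩, fun g hgs => ?_⟩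
      · rw [div_lt_one (by positivity)]
        nlinarith
      · exact forward_lemma hd1 (hpos hgs) (lt_trans one_pos hc1) (hcol g hgs)
    · rintro ⟨ε, ⟨hε0, hε1⟩, h⟩
      exact ⟨ε⁻¹, (one_lt_inv₀ hε0).2 hε1, fun g hgs =>
        extract_lemma hd1 (hpos hgs) hε0 (h g hgs)⟩
  · constructor
    · rintro ⟨c, hc1, hall⟩
      refine ⟨1 / (c * d), ⟨by positivity, ?_⟩, fun g hgs => ?_⟩
      · rw [div_lt_one (by positivity)]
        nlinarith
      refine ⟨forward_lemma hd1 (hpos hgs) (lt_trans one_pos hc1)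
        (fun j i k => hall g hgs i j k j), ?_⟩
      have hgt : ∀ i j, 0 < g.transpose i j := fun i j => hpos hgs j i
      exact forward_lemma hd1 hgt (lt_trans one_pos hc1)
        (fun j i k => hall g hgs j i j k)
    · rintro ⟨ε, ⟨hε0, hε1⟩, h⟩
      have hinv : 1 < ε⁻¹ := (one_lt_inv₀ hε0).2 hε1
      refine ⟨ε⁻¹ * ε⁻¹, by nlinarith, fun g hgs i j k l => ?_⟩
      have h1 := extract_lemma hd1 (hpos hgs) hε0 (h g hgs).1 j i k
      have hgt : ∀ i j, 0 < g.transpose i j := fun i j => hpos hgs j i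
      have h2 := extract_lemma hd1 hgt hε0 (h g hgs).2 k j l
      simp only [Matrix.transpose_apply] at h2
      nlinarith
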